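/- arXiv:2312.12224 — 2 statements merged into one kernel-verified Lean document; each statement's English description precedes it below -/
import Mathlib

section
/- Let b ∈ (0,1), t ∈ ℝ and η ∈ ℤ. Then there is a constant C=C(b)>0 such that for every x ≠ 0, the Stein fractional derivative of the function ξ ↦ e^{it·sign(ξ)η²} satisfies 𝒟^b_ξ(e^{it·sign(ξ)η²})(x) ≤ C · min{1, |t|η²} · |x|^{-b}. -/
/-!
The function `g ξ = e^{i t sign(ξ) η²}` is constant on each half-line, so `g z = g x` as soon as
`|x - z| < |x|`, while always `‖g x - g z‖ ≤ min 2 (2 |t| η²)`. Hence the integrand of `𝒟^b g(x)`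
is at most `(2 min{1, |t|η²})² |x - z|^{-1-2b}` on `|x - z| ≥ |x|` and vanishes elsewhere, and
`∫_{|u| ≥ a} |u|^{-1-2b} du = a^{-2b} / b`.
-/

open MeasureTheory Real Set
open scoped ENNReal

noncomputable section

/-- The Stein fractional derivative of order `b` of a function `g : ℝ → ℂ`:
`𝒟^b g(x) = (∫_ℝ |g(x)-g(z)|²/|x-z|^{1+2b} dz)^{1/2}`. -/
def steinD (b : ℝ) (g : ℝ → ℂ) (x : ℝ) : ℝ :=
  (∫ z : ℝ, ‖g x - g z‖ ^ 2 / |x - z| ^ (1 + 2 * b)) ^ ((1 : ℝ) / 2)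

lemma indicator_Ici_abs {a : ℝ} (ha : 0 < a) (f : ℝ → ℝ) (u : ℝ) :
    (Ici a).indicator f |u| = (Ici a).indicator f u + (Ici a).indicator f (-u) := by
  rcases le_or_gt 0 u with hu | hu
  · have : -u ∉ Ici a := fun h => by simp only [mem_Ici] at h; linarith
    rw [abs_of_nonneg hu, indicator_of_notMem this, add_zero]
  · have : u ∉ Ici a := fun h => by simp only [mem_Ici] at h; linarith
    rw [abs_of_neg hu, indicator_of_notMem this, zero_add]

lemma integrable_indicator_Ici_rpow_abs {a c : ℝ} (ha : 0 < a) (hc : c < -1) :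
    Integrable fun u : ℝ => (Ici a).indicator (· ^ c) |u| := by
  have hF : Integrable ((Ici a).indicator fun r : ℝ => r ^ c) := by
    rw [integrable_indicator_iff measurableSet_Ici, integrableOn_Ici_iff_integrableOn_Ioi]
    exact integrableOn_Ioi_rpow_of_lt hc ha
  exact (hF.add hF.comp_neg).congr (.of_forall fun u => (indicator_Ici_abs ha _ u).symm)

lemma integral_indicator_Ici_rpow_abs {a c : ℝ} (ha : 0 < a) (hc : c < -1) :
    ∫ u : ℝ, (Ici a).indicator (· ^ c) |u| = 2 * (-a ^ (c + 1) / (c + 1)) := by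
  have hIci : Ici a ∩ Ioi 0 = Ici a := inter_eq_self_of_subset_left fun r hr => ha.trans_le hr
  rw [integral_comp_abs (f := (Ici a).indicator (· ^ c)), integral_indicator measurableSet_Ici,
    Measure.restrict_restrict measurableSet_Ici, hIci, integral_Ici_eq_integral_Ioi,
    integral_Ioi_rpow_of_lt hc ha]

theorem steinD_le_of_eq_of_abs_sub_lt {b a M x : ℝ} {g : ℝ → ℂ} (hb : 0 < b) (ha : 0 < a)
    (hM : ∀ z, ‖g x - g z‖ ≤ M) (hconst : ∀ z, |x - z| < a → g z = g x) :
    steinD b g x ≤ M * a ^ (-b) / √b := by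
  have hM0 : 0 ≤ M := by simpa using hM x
  set F : ℝ → ℝ := (Ici a).indicator (· ^ (-(1 + 2 * b))) with hF
  have hc : -(1 + 2 * b) < -1 := by linarith
  have hbound : ∀ z, ‖g x - g z‖ ^ 2 / |x - z| ^ (1 + 2 * b) ≤ M ^ 2 * F |x - z| := by
    intro z
    by_cases hz : |x - z| < a
    · rw [hconst z hz, sub_self, hF, indicator_of_notMem (s := Ici a) (not_le.2 hz)]
      simp
    · rw [hF, indicator_of_mem (s := Ici a) (not_lt.1 hz), rpow_neg (abs_nonneg _),
        ← div_eq_mul_inv]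
      gcongr
      exact hM z
  have hint : ∫ z, M ^ 2 * F |x - z| = (M * a ^ (-b)) ^ 2 / b := by
    rw [integral_const_mul, integral_sub_left_eq_self (fun u => F |u|),
      integral_indicator_Ici_rpow_abs ha hc, mul_pow, ← rpow_natCast (a ^ (-b)),
      ← rpow_mul ha.le, show -(1 + 2 * b) + 1 = -b * (2 : ℕ) by push_cast; ring]
    field_simp
    ring
  -- `integral_mono_of_nonneg` needs no integrability of the integrand, hence no measurability of `g`.
  have hle : ∫ z, ‖g x - g z‖ ^ 2 / |x - z| ^ (1 + 2 * b) ≤ (M * a ^ (-b)) ^ 2 / b :=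
    hint ▸ integral_mono_of_nonneg (.of_forall fun z => by positivity)
      (((integrable_indicator_Ici_rpow_abs ha hc).comp_sub_left x).const_mul _)
      (.of_forall hbound)
  calc steinD b g x = √(∫ z, ‖g x - g z‖ ^ 2 / |x - z| ^ (1 + 2 * b)) := by
        rw [steinD, sqrt_eq_rpow]
    _ ≤ √((M * a ^ (-b)) ^ 2 / b) := sqrt_le_sqrt hle
    _ = M * a ^ (-b) / √b := by
        rw [sqrt_div' _ hb.le, sqrt_sq (by positivity)]

lemma norm_exp_I_mul_ofReal_sub_exp_I_mul_ofReal_le (α β : ℝ) :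
    ‖Complex.exp (Complex.I * α) - Complex.exp (Complex.I * β)‖ ≤ min 2 |α - β| := by
  refine le_min ?_ ?_
  · calc _ ≤ ‖Complex.exp (Complex.I * α)‖ + ‖Complex.exp (Complex.I * β)‖ := norm_sub_le _ _
      _ = 2 := by rw [Complex.norm_exp_I_mul_ofReal, Complex.norm_exp_I_mul_ofReal]; norm_num
  · have hfac : Complex.exp (Complex.I * α) - Complex.exp (Complex.I * β)
        = Complex.exp (Complex.I * β) * (Complex.exp (Complex.I * ↑(α - β)) - 1) := by
      rw [mul_sub, mul_one, ← Complex.exp_add]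
      push_cast
      ring_nf
    rw [hfac, norm_mul, Complex.norm_exp_I_mul_ofReal, one_mul, ← Real.norm_eq_abs]
    exact Real.norm_exp_I_mul_ofReal_sub_one_le

lemma Real.abs_sign_sub_sign_le (x z : ℝ) : |Real.sign x - Real.sign z| ≤ 2 := by
  rcases Real.sign_apply_eq x with hx | hx | hx <;>
    rcases Real.sign_apply_eq z with hz | hz | hz <;> norm_num [hx, hz]

lemma Real.sign_eq_of_abs_sub_lt {x z : ℝ} (h : |x - z| < |x|) : Real.sign z = Real.sign x := by
  rcases lt_trichotomy x 0 with hx | rfl | hx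
  · rw [abs_of_neg hx] at h
    rw [Real.sign_of_neg hx, Real.sign_of_neg (by linarith [neg_abs_le (x - z)])]
  · exact absurd h (by simp)
  · rw [abs_of_pos hx] at h
    rw [Real.sign_of_pos hx, Real.sign_of_pos (by linarith [le_abs_self (x - z)])]

theorem stein_derivative_sign_exponential_bound_general (b : ℝ) (hb₁ : 0 < b) :
    ∃ C : ℝ, 0 < C ∧ ∀ (t : ℝ) (η : ℤ) (x : ℝ), x ≠ 0 →
      steinD b
          (fun ξ : ℝ => Complex.exp (Complex.I * ((t * Real.sign ξ * (η : ℝ) ^ 2 : ℝ) : ℂ))) x ≤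
        C * min 1 (|t| * (η : ℝ) ^ 2) * |x| ^ (-b) := by
  refine ⟨2 / √b, by positivity, fun t η x hx => ?_⟩
  have hphase : ∀ z, |t * Real.sign x * (η : ℝ) ^ 2 - t * Real.sign z * (η : ℝ) ^ 2|
      ≤ 2 * (|t| * (η : ℝ) ^ 2) := fun z => by
    rw [show t * Real.sign x * (η : ℝ) ^ 2 - t * Real.sign z * (η : ℝ) ^ 2
        = t * (η : ℝ) ^ 2 * (Real.sign x - Real.sign z) by ring, abs_mul, abs_mul, abs_sq]
    linarith [mul_le_mul_of_nonneg_left (Real.abs_sign_sub_sign_le x z)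
      (by positivity : 0 ≤ |t| * (η : ℝ) ^ 2)]
  have hosc : ∀ z, ‖Complex.exp (Complex.I * ↑(t * Real.sign x * (η : ℝ) ^ 2))
      - Complex.exp (Complex.I * ↑(t * Real.sign z * (η : ℝ) ^ 2))‖
      ≤ 2 * min 1 (|t| * (η : ℝ) ^ 2) := fun z => by
    rw [mul_min_of_nonneg _ _ zero_le_two, mul_one]
    exact (norm_exp_I_mul_ofReal_sub_exp_I_mul_ofReal_le _ _).trans
      (min_le_min le_rfl (hphase z))
  calc _ ≤ 2 * min 1 (|t| * (η : ℝ) ^ 2) * |x| ^ (-b) / √b :=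
        steinD_le_of_eq_of_abs_sub_lt hb₁ (abs_pos.2 hx) hosc
          fun z hz => by simp only [Real.sign_eq_of_abs_sub_lt hz]
    _ = _ := by ring

/-- **Lemma 2.5, inequality (2.9)**: for `b ∈ (0,1)` there is `C = C(b) > 0` such that
for all `t ∈ ℝ`, `η ∈ ℤ` and `x ≠ 0`, the Stein fractional derivative of
`ξ ↦ e^{it·sign(ξ)·η²}` satisfies
`𝒟^b_ξ(e^{it sign(ξ)η²})(x) ≤ C · min{1, |t|η²} · |x|^{-b}`. -/
theorem stein_derivative_sign_exponential_bound (b : ℝ) (hb₁ : 0 < b) (hb₂ : b < 1) :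
    ∃ C : ℝ, 0 < C ∧ ∀ (t : ℝ) (η : ℤ) (x : ℝ), x ≠ 0 →
      steinD b
          (fun ξ : ℝ => Complex.exp (Complex.I * ((t * Real.sign ξ * (η : ℝ) ^ 2 : ℝ) : ℂ))) x ≤
        C * min 1 (|t| * (η : ℝ) ^ 2) * |x| ^ (-b) :=
  stein_derivative_sign_exponential_bound_general b hb₁
end
end

section
/- Let 1/2<θ<1, t ∈ ℝ, η ∈ ℤ, and let φ ∈ C^∞_c(ℝ) with φ = 1 on [−δ,δ] for some δ>0. Then for every x with 0<x<δ, the Stein fractional derivative satisfies 𝒟^θ_ξ( e^{it·sign(ξ)η²} φ(ξ) )(x) ≥ c |sin(tη²)| x^{-θ} for some constant c>0 depending only on θ and δ. Consequently, if sin(tη²) ≠ 0 (in particular, this yields that the vanishing of \hat f(0,η) is necessary in the corresponding unique continuation results), then the function ξ ↦ e^{it·sign(ξ)η²} φ(ξ) does not satisfy 𝒟^θ_ξ(e^{it·sign(ξ)η²}φ(ξ)) ∈ L²(ℝ). -/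
/-!
For `0 < x < δ` the function `g(ξ) = e^{i t sign(ξ) η²} φ(ξ)` equals `e^{itη²}` at `x` and
`e^{-itη²}` on `(-x, 0)`, so `|g(x) - g(z)| = 2|sin(tη²)|` on an interval of length `x` where
`|x - z| ≤ 2x`; this alone gives `𝒟^θ g(x)² ≥ 4 sin²(tη²) (2x)^{-1-2θ} x`. The integral
must be shown finite, since a divergent Bochner integral is `0`: `g` is bounded and Lipschitz
on `(0, ∞)`, which suffices near `z = x` because `θ < 1`. Finally `x^{-θ}` is not square
integrable near `0` once `θ ≥ 1/2`.
-/

open MeasureTheory Real Set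
open scoped ENNReal

noncomputable section

lemma integrableOn_compl_ball_abs_rpow {s r : ℝ} (hs : s < -1) (hr : 0 < r) :
    IntegrableOn (fun y : ℝ => |y| ^ s) (Metric.ball 0 r)ᶜ := by
  have hfar : IntegrableOn (fun y : ℝ => y ^ s) (Ici r) :=
    (integrableOn_Ici_iff_integrableOn_Ioi).2 (integrableOn_Ioi_rpow_of_lt hs hr)
  have hrad : (Metric.ball (0 : ℝ) r)ᶜ.indicator (fun y => |y| ^ s) =
      fun y => (Ici r).indicator (fun u => u ^ s) ‖y‖ := by
    ext y
    simp [indicator, Real.norm_eq_abs]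
  rw [← integrable_indicator_iff measurableSet_ball.compl, hrad,
    integrable_fun_norm_addHaar volume]
  simpa using (integrable_indicator_iff measurableSet_Ici).2 hfar |>.integrableOn

lemma integrable_steinIntegrand {E : Type*} [NormedAddCommGroup E] {g : ℝ → E}
    {θ x r K L : ℝ} (hθ₀ : 0 < θ) (hθ₁ : θ < 1) (hr : 0 < r) (hg : AEStronglyMeasurable g)
    (hK : ∀ z, ‖g x - g z‖ ≤ K) (hL : ∀ z, |x - z| < r → ‖g x - g z‖ ≤ L * |x - z|) :
    Integrable (fun z => ‖g x - g z‖ ^ 2 / |x - z| ^ (1 + 2 * θ)) := by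
  set F : ℝ → ℝ := fun y => ‖g x - g (x - y)‖ ^ 2 / |y| ^ (1 + 2 * θ)
  suffices Integrable F by simpa [F] using this.comp_sub_left x
  have hF : AEStronglyMeasurable F := by
    have : AEStronglyMeasurable (fun y => g (x - y)) :=
      hg.comp_quasiMeasurePreserving (quasiMeasurePreserving_sub_left volume x)
    refine (AEMeasurable.div ?_ ?_).aestronglyMeasurable
    · exact (aestronglyMeasurable_const.sub this).norm.aemeasurable.pow_const 2
    · exact (measurable_abs.pow_const _).aemeasurable
  have near : IntegrableOn F (Metric.ball 0 r) := by
    refine integrableOn_ball_of_norm_le_rpow (α := 2 * θ - 1) (C := L ^ 2) (by simp)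
      (by simp; linarith) ?_ hF
    refine (ae_restrict_iff' measurableSet_ball).2 (ae_of_all _ fun y hy => ?_)
    rw [mem_ball_zero_iff] at hy
    rw [Real.norm_eq_abs, abs_of_nonneg (by positivity), Real.norm_eq_abs]
    dsimp only [F]
    rcases eq_or_ne y 0 with rfl | hy0
    · simp; positivity
    have hy' : 0 < |y| := abs_pos.2 hy0
    have hlip : ‖g x - g (x - y)‖ ≤ L * |y| := by
      simpa using hL (x - y) (by simpa using hy)
    calc _ ≤ (L * |y|) ^ 2 / |y| ^ (1 + 2 * θ) := by
          gcongr
      _ = L ^ 2 * |y| ^ (-(2 * θ - 1)) := by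
          rw [mul_pow, mul_div_assoc, ← Real.rpow_natCast |y| 2, ← Real.rpow_sub hy']
          congr 2; push_cast; ring
  have far : IntegrableOn F (Metric.ball 0 r)ᶜ := by
    refine ((integrableOn_compl_ball_abs_rpow (s := -(1 + 2 * θ)) (by linarith) hr).const_mul
      (K ^ 2)).mono' hF.restrict ?_
    refine (ae_restrict_iff' measurableSet_ball.compl).2 (ae_of_all _ fun y hy => ?_)
    simp only [mem_compl_iff, mem_ball_zero_iff, not_lt] at hy
    have hy' : 0 < |y| := hr.trans_le hy
    rw [Real.norm_eq_abs, abs_of_nonneg (by positivity), Real.rpow_neg hy'.le, ← div_eq_mul_inv]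
    dsimp only [F]
    gcongr
    exact hK _
  simpa using near.union far

lemma le_steinD_of_le_norm_sub {g : ℝ → ℂ} {θ x m : ℝ} (hθ : 0 ≤ 1 + 2 * θ) (hx : 0 < x)
    (hm : 0 ≤ m) (hint : Integrable (fun z => ‖g x - g z‖ ^ 2 / |x - z| ^ (1 + 2 * θ)))
    (hgap : ∀ z ∈ Ioo (-x) 0, m ≤ ‖g x - g z‖) :
    (2 : ℝ) ^ (-(1 / 2 + θ)) * m * x ^ (-θ) ≤ steinD θ g x := by
  set p := 1 + 2 * θ with hp
  have hpt : ∀ z ∈ Ioo (-x) 0, m ^ 2 * (2 * x) ^ (-p) ≤ ‖g x - g z‖ ^ 2 / |x - z| ^ p := by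
    rintro z ⟨hz₁, hz₂⟩
    have hxz : 0 < x - z := by linarith
    rw [abs_of_pos hxz, Real.rpow_neg (by positivity), ← div_eq_mul_inv]
    gcongr
    · exact hgap z ⟨hz₁, hz₂⟩
    · linarith
  have hset := setIntegral_ge_of_const_le_real measurableSet_Ioo measure_Ioo_lt_top.ne hpt
    hint.integrableOn
  have htot := setIntegral_le_integral (s := Ioo (-x) 0) hint (ae_of_all _ fun z => by positivity)
  have h2 : ((2 : ℝ) ^ (-(1 / 2 + θ))) ^ 2 = 2 ^ (-p) := by
    rw [← Real.rpow_natCast, ← Real.rpow_mul zero_le_two]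
    congr 1; push_cast; linarith
  have hx2 : (x ^ (-θ)) ^ 2 = x ^ (-p) * x := by
    rw [← Real.rpow_natCast, ← Real.rpow_mul hx.le, ← Real.rpow_add_one hx.ne']
    congr 1; push_cast; linarith
  rw [steinD, ← Real.sqrt_eq_rpow,
    Real.le_sqrt (by positivity) (integral_nonneg fun z => by positivity)]
  calc (2 ^ (-(1 / 2 + θ)) * m * x ^ (-θ)) ^ 2
      = m ^ 2 * (2 * x) ^ (-p) * volume.real (Ioo (-x) 0) := by
        rw [Real.volume_real_Ioo_of_le (by linarith), mul_pow, mul_pow, h2, hx2,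
          Real.mul_rpow zero_le_two hx.le]
        ring
    _ ≤ _ := hset.trans htot

lemma not_memLp_two_indicator_Ioo_rpow_neg {θ δ : ℝ} (hθ : 1 / 2 ≤ θ) (hδ : 0 < δ) :
    ¬ MemLp ((Ioo 0 δ).indicator fun x : ℝ => x ^ (-θ)) 2 := by
  intro h
  have hsq : (fun x => (Ioo 0 δ).indicator (fun x : ℝ => x ^ (-θ)) x ^ 2) =
      (Ioo 0 δ).indicator fun x => x ^ (-(2 * θ)) := by
    ext x
    by_cases hx : x ∈ Ioo 0 δ
    · rw [indicator_of_mem hx, indicator_of_mem hx, ← Real.rpow_natCast,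
        ← Real.rpow_mul hx.1.le]
      congr 1; push_cast; ring
    · simp [hx]
  have hint := h.integrable_sq
  rw [hsq, integrable_indicator_iff measurableSet_Ioo,
    intervalIntegral.integrableOn_Ioo_rpow_iff hδ] at hint
  linarith

lemma eLpNorm_two_eq_top_of_rpow_neg_le {f : ℝ → ℝ} {C θ δ : ℝ} (hθ : 1 / 2 ≤ θ)
    (hδ : 0 < δ) (hC : 0 < C) (hf : ∀ x ∈ Ioo 0 δ, C * x ^ (-θ) ≤ f x) :
    eLpNorm f 2 volume = ⊤ := by
  set u := (Ioo 0 δ).indicator fun x : ℝ => x ^ (-θ)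
  have hu : eLpNorm u 2 volume = ⊤ := by
    by_contra hfin
    exact not_memLp_two_indicator_Ioo_rpow_neg hθ hδ
      ⟨((measurable_id.pow_const _).indicator measurableSet_Ioo).aestronglyMeasurable,
        lt_top_iff_ne_top.2 hfin⟩
  have hle : eLpNorm (C • u) 2 volume ≤ eLpNorm f 2 volume := by
    refine eLpNorm_mono fun x => ?_
    by_cases hx : x ∈ Ioo 0 δ
    · have hpos : 0 ≤ C * x ^ (-θ) := by have := hx.1; positivity
      simp only [u, Pi.smul_apply, indicator_of_mem hx, smul_eq_mul, Real.norm_eq_abs,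
        abs_of_nonneg hpos]
      exact (hf x hx).trans (le_abs_self _)
    · simp [u, hx]
  rwa [eLpNorm_const_smul, hu, ENNReal.mul_top (by simpa using hC.ne'), top_le_iff] at hle

def signModulated (t s : ℝ) (φ : ℝ → ℝ) (ξ : ℝ) : ℂ :=
  Complex.exp (Complex.I * ((t * Real.sign ξ * s : ℝ) : ℂ)) * ((φ ξ : ℝ) : ℂ)

@[fun_prop]
lemma Real.measurable_sign : Measurable Real.sign :=
  measurable_const.ite measurableSet_Iio (measurable_const.ite measurableSet_Ioi measurable_const)

lemma norm_exp_mul_I_sub_exp_neg_mul_I (a : ℝ) :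
    ‖Complex.exp (a * Complex.I) - Complex.exp (-a * Complex.I)‖ = 2 * |Real.sin a| := by
  have h := Complex.two_sin (a : ℂ)
  rw [← neg_sub, norm_neg, ← mul_div_cancel_right₀ (_ - _) Complex.I_ne_zero, ← h, norm_div,
    Complex.norm_I, div_one, norm_mul, ← Complex.ofReal_sin, Complex.norm_real, Real.norm_eq_abs]
  norm_num

namespace signModulated

variable {t s : ℝ} {φ : ℝ → ℝ}

lemma of_pos {ξ : ℝ} (hξ : 0 < ξ) :
    signModulated t s φ ξ = Complex.exp ((t * s : ℝ) * Complex.I) * φ ξ := by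
  simp [signModulated, Real.sign_of_pos hξ, mul_comm Complex.I]

lemma of_neg {ξ : ℝ} (hξ : ξ < 0) :
    signModulated t s φ ξ = Complex.exp (-(t * s : ℝ) * Complex.I) * φ ξ := by
  simp [signModulated, Real.sign_of_neg hξ, mul_comm Complex.I]

lemma norm_apply (ξ : ℝ) : ‖signModulated t s φ ξ‖ = ‖φ ξ‖ := by
  rw [signModulated, norm_mul, mul_comm Complex.I, Complex.norm_exp_ofReal_mul_I, one_mul,
    Complex.norm_real]

lemma measurable (hφ : Measurable φ) : Measurable (signModulated t s φ) := by
  unfold signModulated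
  fun_prop

lemma norm_sub_of_pos {x z : ℝ} (hx : 0 < x) (hz : 0 < z) :
    ‖signModulated t s φ x - signModulated t s φ z‖ = |φ x - φ z| := by
  rw [of_pos hx, of_pos hz, ← mul_sub, norm_mul, Complex.norm_exp_ofReal_mul_I, one_mul,
    ← Complex.ofReal_sub, Complex.norm_real, Real.norm_eq_abs]

lemma norm_sub_of_neg {x z : ℝ} (hx : 0 < x) (hz : z < 0) (hφx : φ x = 1) (hφz : φ z = 1) :
    ‖signModulated t s φ x - signModulated t s φ z‖ = 2 * |Real.sin (t * s)| := by
  rw [of_pos hx, of_neg hz, hφx, hφz]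
  simpa using norm_exp_mul_I_sub_exp_neg_mul_I (t * s)

end signModulated

lemma le_steinD_signModulated {θ δ t s M x : ℝ} {φ : ℝ → ℝ} {K : NNReal} (hθ₀ : 0 < θ)
    (hθ₁ : θ < 1) (hM : ∀ ξ, ‖φ ξ‖ ≤ M) (hK : LipschitzWith K φ)
    (hφ1 : ∀ ξ, |ξ| ≤ δ → φ ξ = 1) (hx : 0 < x) (hxδ : x ≤ δ) :
    (2 : ℝ) ^ (1 / 2 - θ) * |Real.sin (t * s)| * x ^ (-θ) ≤ steinD θ (signModulated t s φ) x := by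
  set g := signModulated t s φ
  have hbdd : ∀ z, ‖g x - g z‖ ≤ 2 * M := fun z => by
    calc ‖g x - g z‖ ≤ ‖g x‖ + ‖g z‖ := norm_sub_le _ _
      _ ≤ 2 * M := by rw [signModulated.norm_apply, signModulated.norm_apply]; linarith [hM x, hM z]
  have hlip : ∀ z, |x - z| < x → ‖g x - g z‖ ≤ K * |x - z| := fun z hz => by
    rw [signModulated.norm_sub_of_pos hx (by linarith [le_abs_self (x - z)])]
    simpa [Real.dist_eq] using hK.dist_le_mul x z
  have hint := integrable_steinIntegrand hθ₀ hθ₁ hx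
    (signModulated.measurable hK.continuous.measurable).aestronglyMeasurable hbdd hlip
  have hgap : ∀ z ∈ Ioo (-x) 0, 2 * |Real.sin (t * s)| ≤ ‖g x - g z‖ := fun z ⟨hz₁, hz₂⟩ =>
    (signModulated.norm_sub_of_neg hx hz₂ (hφ1 x (by rw [abs_of_pos hx]; exact hxδ))
      (hφ1 z (by rw [abs_of_neg hz₂]; linarith))).ge
  have hc : (2 : ℝ) ^ (1 / 2 - θ) = 2 ^ (-(1 / 2 + θ)) * 2 := by
    rw [← Real.rpow_add_one two_ne_zero]; ring_nf
  rw [hc, mul_assoc _ 2]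
  exact le_steinD_of_le_norm_sub (by linarith) hx (by positivity) hint hgap

/-- **Claim 3.4 (i)** (lower bound for the Stein derivative): for `1/2 < θ < 1` and
`δ > 0` there is `c = c(θ,δ) > 0` such that for all `t ∈ ℝ`, `η ∈ ℤ` and every
`φ ∈ C^∞_c(ℝ)` with `φ = 1` on `[-δ,δ]`, one has, for every `0 < x < δ`,
`𝒟^θ_ξ(e^{it sign(ξ)η²} φ(ξ))(x) ≥ c |sin(tη²)| x^{-θ}`; consequently, if
`sin(tη²) ≠ 0`, then `𝒟^θ_ξ(e^{it sign(ξ)η²} φ(ξ)) ∉ L²(ℝ)`. -/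
theorem stein_derivative_lower_bound (θ δ : ℝ) (hθ₁ : 1 / 2 < θ) (hθ₂ : θ < 1)
    (hδ : 0 < δ) :
    ∃ c : ℝ, 0 < c ∧ ∀ (t : ℝ) (η : ℤ) (φ : ℝ → ℝ),
      ContDiff ℝ ((⊤ : ℕ∞) : WithTop ℕ∞) φ → HasCompactSupport φ → (∀ ξ : ℝ, |ξ| ≤ δ → φ ξ = 1) →
      (∀ x : ℝ, 0 < x → x < δ →
        c * |Real.sin (t * (η : ℝ) ^ 2)| * x ^ (-θ) ≤
          steinD θ
            (fun ξ : ℝ =>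
              Complex.exp (Complex.I * ((t * Real.sign ξ * (η : ℝ) ^ 2 : ℝ) : ℂ)) *
                ((φ ξ : ℝ) : ℂ)) x) ∧
      (Real.sin (t * (η : ℝ) ^ 2) ≠ 0 →
        eLpNorm (fun x : ℝ =>
          steinD θ
            (fun ξ : ℝ =>
              Complex.exp (Complex.I * ((t * Real.sign ξ * (η : ℝ) ^ 2 : ℝ) : ℂ)) *
                ((φ ξ : ℝ) : ℂ)) x) 2 volume = ⊤) := by
  refine ⟨2 ^ (1 / 2 - θ), by positivity, fun t η φ hφ hφc hφ1 => ?_⟩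
  obtain ⟨M, hM⟩ := hφc.exists_bound_of_continuous hφ.continuous
  obtain ⟨K, hK⟩ := hφ.lipschitzWith_of_hasCompactSupport hφc (by simp)
  have hlow : ∀ x : ℝ, 0 < x → x < δ → 2 ^ (1 / 2 - θ) * |Real.sin (t * (η : ℝ) ^ 2)| * x ^ (-θ) ≤
      steinD θ (signModulated t ((η : ℝ) ^ 2) φ) x := fun x hx hxδ =>
    le_steinD_signModulated (by linarith) hθ₂ hM hK hφ1 hx hxδ.le
  exact ⟨hlow, fun hsin =>
    eLpNorm_two_eq_top_of_rpow_neg_le hθ₁.le hδ (by positivity) fun x hx => hlow x hx.1 hx.2⟩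
end
end
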